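/- Let S be a countable polymer set with symmetric reflexive incompatibility relation, ẑ : S → [0,∞) and a : S → (0,∞), and suppose Σ_{Y ≁ X} ẑ(Y) e^{a(Y)} ≤ a(X) for every X ∈ S. Then 𝔛_X(A) ≤ ẑ(X) e^{a(X)} for every finite A ⊆ S and every X ∈ A, and consequently Σ_{Y ≁ X} 𝔛_Y(S) ≤ a(X) for every X ∈ S, where 𝔛_Y(S) denotes the sum of Π_{W ∈ Δ} ẑ(W) over all finite clusters Δ ⊆ S containing Y. -/

import Mathlib

open scoped Classical

/-- A nonempty finite set of polymers is a cluster if it admits no decomposition into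
two nonempty disjoint elementwise compatible parts. -/
def IsCluster {S : Type*} (incomp : S → S → Prop) (Δ : Finset S) : Prop :=
  Δ.Nonempty ∧
    ¬ ∃ Δ₁ Δ₂ : Finset S, Δ₁.Nonempty ∧ Δ₂.Nonempty ∧ Disjoint Δ₁ Δ₂ ∧
      (∀ X, X ∈ Δ ↔ (X ∈ Δ₁ ∨ X ∈ Δ₂)) ∧
      ∀ X ∈ Δ₁, ∀ Y ∈ Δ₂, ¬ incomp X Y

/-- `𝔛_X(A)`: the sum over clusters `Δ ⊆ A` containing `X` of `Π_{Y ∈ Δ} ẑ(Y)`. -/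
noncomputable def clusterSum {S : Type*} (incomp : S → S → Prop) (zhat : S → ℝ)
    (A : Finset S) (X : S) : ℝ :=
  ∑ Δ ∈ A.powerset.filter (fun Δ => IsCluster incomp Δ ∧ X ∈ Δ), ∏ Y ∈ Δ, zhat Y

/-- `𝔛_Y(S)`: the sum over all finite clusters `Δ ⊆ S` containing `Y` of
`Π_{W ∈ Δ} ẑ(W)` (as an extended nonnegative real). -/
noncomputable def clusterSumTop {S : Type*} (incomp : S → S → Prop) (zhat : S → ℝ)
    (Y : S) : ENNReal :=
  ∑' Δ : {Δ : Finset S // IsCluster incomp Δ ∧ Y ∈ Δ},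
    ENNReal.ofReal (∏ W ∈ Δ.1, zhat W)

/-! Induction on `A`. Removing `X` from a cluster `Δ ∋ X` leaves a set `Γ` each of whose
connected components contains a polymer incompatible with `X`. Anchoring every component at a
chosen such polymer writes `Γ` as a disjoint union of clusters `Δ_Y ∋ Y` indexed by distinct
neighbours `Y` of `X`, so
`𝔛_X(A) ≤ ẑ(X) ∏_{Y ≁ X} (1 + 𝔛_Y(A \ {X}))`
`       ≤ ẑ(X) exp (∑_{Y ≁ X} ẑ(Y) e^{a(Y)}) ≤ ẑ(X) e^{a(X)}`
by the induction hypothesis and `1 + t ≤ eᵗ`. The bound on `𝔛_Y(S)` follows because finitely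
many finite clusters all lie in one finite set `A`. -/

open Finset

section Components

variable {S : Type*} (incomp : S → S → Prop)

def ReachIn (Γ : Finset S) : S → S → Prop :=
  Relation.ReflTransGen fun u v => u ∈ Γ ∧ v ∈ Γ ∧ incomp u v

noncomputable def componentIn (Γ : Finset S) (Y : S) : Finset S :=
  Γ.filter (ReachIn incomp Γ Y)

variable {incomp} {Γ : Finset S} {X Y Z : S}

theorem ReachIn.symm [Std.Symm incomp] (h : ReachIn incomp Γ Y Z) :
    ReachIn incomp Γ Z Y := by
  induction h with
  | refl => exact .refl
  | tail _ step ih => exact .head ⟨step.2.1, step.1, symm_of incomp step.2.2⟩ ih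

theorem mem_componentIn : Z ∈ componentIn incomp Γ Y ↔ Z ∈ Γ ∧ ReachIn incomp Γ Y Z :=
  mem_filter

theorem componentIn_subset : componentIn incomp Γ Y ⊆ Γ :=
  filter_subset _ _

theorem mem_componentIn_self (hY : Y ∈ Γ) : Y ∈ componentIn incomp Γ Y :=
  mem_componentIn.2 ⟨hY, .refl⟩

theorem componentIn_eq_of_mem [Std.Symm incomp] (hZ : Z ∈ componentIn incomp Γ Y) :
    componentIn incomp Γ Z = componentIn incomp Γ Y := by
  have hYZ := (mem_componentIn.1 hZ).2
  ext W
  simp only [mem_componentIn]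
  exact and_congr_right fun _ =>
    ⟨Relation.ReflTransGen.trans hYZ, Relation.ReflTransGen.trans hYZ.symm⟩

theorem isCluster_componentIn [Std.Symm incomp] (hY : Y ∈ Γ) :
    IsCluster incomp (componentIn incomp Γ Y) := by
  refine ⟨⟨Y, mem_componentIn_self hY⟩, ?_⟩
  rintro ⟨Δ₁, Δ₂, ⟨Y₁, hY₁⟩, ⟨Y₂, hY₂⟩, hdisj, hcover, hsep⟩
  have side : ∀ W, ReachIn incomp Γ Y W → (W ∈ Δ₁ ↔ Y ∈ Δ₁) := by
    intro W hW
    induction hW with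
    | refl => rfl
    | @tail U V hU step ih =>
      rw [← ih]
      have hU' := (hcover U).1 (mem_componentIn.2 ⟨step.1, hU⟩)
      have hV' := (hcover V).1 (mem_componentIn.2 ⟨step.2.1, hU.tail step⟩)
      constructor
      · intro hV
        exact hU'.resolve_right fun hU₂ => hsep V hV U hU₂ (symm step.2.2)
      · intro hU₁
        exact hV'.resolve_right fun hV₂ => hsep U hU₁ V hV₂ step.2.2
  have h₁ := side Y₁ (mem_componentIn.1 ((hcover Y₁).2 (Or.inl hY₁))).2
  have h₂ := side Y₂ (mem_componentIn.1 ((hcover Y₂).2 (Or.inr hY₂))).2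
  exact disjoint_left.1 hdisj (h₂.2 (h₁.1 hY₁)) hY₂

theorem exists_incomp_mem_componentIn_of_isCluster_insert (hX : X ∉ Γ)
    (hcl : IsCluster incomp (insert X Γ)) (hZ : Z ∈ Γ) :
    ∃ Y ∈ componentIn incomp Γ Z, incomp Y X := by
  by_contra! hsep
  have hsub : componentIn incomp Γ Z ⊆ insert X Γ :=
    componentIn_subset.trans (subset_insert _ _)
  refine hcl.2 ⟨componentIn incomp Γ Z, insert X Γ \ componentIn incomp Γ Z,
    ⟨Z, mem_componentIn_self hZ⟩,
    ⟨X, mem_sdiff.2 ⟨mem_insert_self _ _, fun h => hX (componentIn_subset h)⟩⟩,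
    disjoint_sdiff, fun W => by rw [← mem_union, union_sdiff_of_subset hsub],
    fun U hU V hV hUV => ?_⟩
  obtain ⟨hV, hVU⟩ := mem_sdiff.1 hV
  obtain ⟨hUΓ, hZU⟩ := mem_componentIn.1 hU
  rcases mem_insert.1 hV with rfl | hVΓ
  · exact hsep U hU hUV
  · exact hVU (mem_componentIn.2 ⟨hVΓ, hZU.tail ⟨hUΓ, hVΓ, hUV⟩⟩)

end Components

section Anchor

open Function

variable {S : Type*} (incomp : S → S → Prop) (X : S)

noncomputable def anchor (C : Finset S) : S :=
  if h : ∃ Y ∈ C, incomp Y X then h.choose else X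

noncomputable def anchoredComponent (Γ : Finset S) (Y : S) : Finset S :=
  if Y ∈ Γ ∧ anchor incomp X (componentIn incomp Γ Y) = Y then componentIn incomp Γ Y
  else ∅

variable {incomp X}

theorem anchor_spec {C : Finset S} (h : ∃ Y ∈ C, incomp Y X) :
    anchor incomp X C ∈ C ∧ incomp (anchor incomp X C) X := by
  rw [anchor, dif_pos h]
  exact h.choose_spec

theorem pairwise_disjoint_anchoredComponent [Std.Symm incomp] (Γ : Finset S) :
    Pairwise (Disjoint on (anchoredComponent incomp X Γ)) := by
  intro Y Y' hne
  simp only [Function.onFun, anchoredComponent]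
  split_ifs with h h'
  · refine disjoint_left.2 fun Z hZ hZ' => hne ?_
    rw [← h.2, ← componentIn_eq_of_mem hZ, componentIn_eq_of_mem hZ', h'.2]
  exacts [disjoint_empty_right _, disjoint_empty_left _, disjoint_empty_left _]

theorem biUnion_anchoredComponent [Std.Symm incomp] {B Γ : Finset S} (hΓB : Γ ⊆ B)
    (hX : X ∉ Γ) (hcl : IsCluster incomp (insert X Γ)) :
    (B.filter (incomp · X)).biUnion (anchoredComponent incomp X Γ) = Γ := by
  refine Subset.antisymm (biUnion_subset.2 fun Y _ => ?_) fun Z hZ => ?_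
  · unfold anchoredComponent
    split_ifs
    exacts [componentIn_subset, empty_subset _]
  · obtain ⟨hYZ, hYX⟩ :=
      anchor_spec (exists_incomp_mem_componentIn_of_isCluster_insert hX hcl hZ)
    set Y := anchor incomp X (componentIn incomp Γ Z)
    have hcomp := componentIn_eq_of_mem hYZ
    have hYΓ := componentIn_subset hYZ
    refine mem_biUnion.2 ⟨Y, mem_filter.2 ⟨hΓB hYΓ, hYX⟩, ?_⟩
    rw [anchoredComponent, if_pos ⟨hYΓ, by rw [hcomp]⟩, hcomp]
    exact mem_componentIn_self hZ

theorem anchoredComponent_mem [Std.Symm incomp] {B Γ : Finset S} (hΓB : Γ ⊆ B)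
    (Y : S) : anchoredComponent incomp X Γ Y ∈
      insert ∅ (B.powerset.filter fun Δ => IsCluster incomp Δ ∧ Y ∈ Δ) := by
  unfold anchoredComponent
  split_ifs with h
  · exact mem_insert_of_mem (mem_filter.2 ⟨mem_powerset.2 (componentIn_subset.trans hΓB),
      isCluster_componentIn h.1, mem_componentIn_self h.1⟩)
  · exact mem_insert_self _ _

end Anchor

theorem Finset.sum_le_of_tsum_subtype_le {S : Type*} {p : S → Prop} {f : S → ℝ}
    (hf : ∀ x, 0 ≤ f x) {c : ℝ} (hc : 0 ≤ c)
    (h : ∑' x : {x // p x}, ENNReal.ofReal (f x) ≤ ENNReal.ofReal c)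
    (N : Finset S) (hN : ∀ x ∈ N, p x) : ∑ x ∈ N, f x ≤ c := by
  rw [← ENNReal.ofReal_le_ofReal_iff hc, ENNReal.ofReal_sum_of_nonneg fun x _ => hf x]
  calc ∑ x ∈ N, ENNReal.ofReal (f x)
      = ∑ x ∈ N.subtype p, ENNReal.ofReal (f x) := by
        rw [sum_subtype_eq_sum_filter (fun x => ENNReal.ofReal (f x)), filter_true_of_mem hN]
    _ ≤ ∑' x : {x // p x}, ENNReal.ofReal (f x) := ENNReal.sum_le_tsum _
    _ ≤ ENNReal.ofReal c := h

section ClusterSum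

variable {S : Type*} {incomp : S → S → Prop} {zhat : S → ℝ}

theorem clusterSum_nonneg (hz : ∀ X, 0 ≤ zhat X) (A : Finset S) (X : S) :
    0 ≤ clusterSum incomp zhat A X :=
  sum_nonneg fun _ _ => prod_nonneg fun Y _ => hz Y

theorem clusterSum_eq_zero_of_notMem {A : Finset S} {X : S} (hX : X ∉ A) :
    clusterSum incomp zhat A X = 0 :=
  sum_eq_zero fun _ hΔ => absurd (mem_powerset.1 (mem_filter.1 hΔ).1 (mem_filter.1 hΔ).2.2) hX

theorem clusterSum_eq_mul_sum_isCluster_insert {A : Finset S} {X : S} (hX : X ∈ A) :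
    clusterSum incomp zhat A X = zhat X *
      ∑ Γ ∈ (A.erase X).powerset.filter (fun Γ => IsCluster incomp (insert X Γ)),
        ∏ Y ∈ Γ, zhat Y := by
  rw [clusterSum, mul_sum]
  refine sum_nbij' (fun Δ => Δ.erase X) (insert X) (fun Δ hΔ => ?_) (fun Γ hΓ => ?_)
    (fun Δ hΔ => insert_erase (mem_filter.1 hΔ).2.2) (fun Γ hΓ => ?_)
    (fun Δ hΔ => (mul_prod_erase Δ zhat (mem_filter.1 hΔ).2.2).symm)
  · obtain ⟨hΔA, hcl, hXΔ⟩ := mem_filter.1 hΔ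
    exact mem_filter.2 ⟨mem_powerset.2 (erase_subset_erase X (mem_powerset.1 hΔA)),
      by rwa [insert_erase hXΔ]⟩
  · obtain ⟨hΓA, hcl⟩ := mem_filter.1 hΓ
    exact mem_filter.2 ⟨mem_powerset.2 (insert_subset hX ((mem_powerset.1 hΓA).trans
      (erase_subset X A))), hcl, mem_insert_self _ _⟩
  · exact erase_insert fun h => notMem_erase X A (mem_powerset.1 (mem_filter.1 hΓ).1 h)

theorem sum_prod_isCluster_insert_le [Std.Symm incomp] (hz : ∀ X, 0 ≤ zhat X)
    {B : Finset S} {X : S} (hXB : X ∉ B) :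
    ∑ Γ ∈ B.powerset.filter (fun Γ => IsCluster incomp (insert X Γ)), ∏ Y ∈ Γ, zhat Y
      ≤ ∏ Y ∈ B.filter (incomp · X), (1 + clusterSum incomp zhat B Y) := by
  set D := B.powerset.filter (fun Γ => IsCluster incomp (insert X Γ))
  set N := B.filter (incomp · X)
  set K : S → Finset (Finset S) :=
    fun Y => insert ∅ (B.powerset.filter fun Δ => IsCluster incomp Δ ∧ Y ∈ Δ)
  have hD : ∀ Γ ∈ D, Γ ⊆ B ∧ IsCluster incomp (insert X Γ) := fun Γ hΓ =>
    ⟨mem_powerset.1 (mem_filter.1 hΓ).1, (mem_filter.1 hΓ).2⟩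
  have hcover : ∀ Γ ∈ D, N.biUnion (anchoredComponent incomp X Γ) = Γ := fun Γ hΓ =>
    biUnion_anchoredComponent (hD Γ hΓ).1 (fun h => hXB ((hD Γ hΓ).1 h)) (hD Γ hΓ).2
  set split : Finset S → ∀ Y ∈ N, Finset S := fun Γ Y _ => anchoredComponent incomp X Γ Y
  have hsplit : Set.InjOn split D := by
    intro Γ hΓ Γ' hΓ' h
    rw [← hcover Γ hΓ, ← hcover Γ' hΓ']
    exact biUnion_congr rfl fun Y hY => congr_fun (congr_fun h Y) hY
  calc ∑ Γ ∈ D, ∏ Y ∈ Γ, zhat Y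
      = ∑ Γ ∈ D, ∏ Y ∈ N.attach, ∏ W ∈ split Γ Y.1 Y.2, zhat W := by
        refine sum_congr rfl fun Γ hΓ => ?_
        rw [prod_attach N fun Y => ∏ W ∈ anchoredComponent incomp X Γ Y, zhat W]
        conv_lhs => rw [← hcover Γ hΓ]
        exact prod_biUnion ((pairwise_disjoint_anchoredComponent Γ).set_pairwise _)
    _ = ∑ p ∈ D.image split, ∏ Y ∈ N.attach, ∏ W ∈ p Y.1 Y.2, zhat W := by
        rw [sum_image hsplit]
    _ ≤ ∑ p ∈ N.pi K, ∏ Y ∈ N.attach, ∏ W ∈ p Y.1 Y.2, zhat W :=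
        sum_le_sum_of_subset_of_nonneg
          (image_subset_iff.2 fun Γ hΓ => mem_pi.2 fun Y _ =>
            anchoredComponent_mem (hD Γ hΓ).1 Y)
          fun p _ _ => prod_nonneg fun Y _ => prod_nonneg fun W _ => hz W
    _ = ∏ Y ∈ N, ∑ Δ ∈ K Y, ∏ W ∈ Δ, zhat W :=
        (prod_sum (κ := fun _ => Finset S) N K fun _ Δ => ∏ W ∈ Δ, zhat W).symm
    _ = ∏ Y ∈ N, (1 + clusterSum incomp zhat B Y) := by
        refine prod_congr rfl fun Y _ => ?_
        rw [sum_insert fun h => notMem_empty Y (mem_filter.1 h).2.2, prod_empty, clusterSum]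

theorem clusterSum_le_mul_exp [Std.Symm incomp] (hz : ∀ X, 0 ≤ zhat X) {a : S → ℝ}
    (hcond : ∀ X (N : Finset S), (∀ Y ∈ N, incomp Y X) →
      ∑ Y ∈ N, zhat Y * Real.exp (a Y) ≤ a X)
    (A : Finset S) (X : S) : clusterSum incomp zhat A X ≤ zhat X * Real.exp (a X) := by
  induction A using Finset.strongInduction generalizing X with
  | H A ih =>
    by_cases hX : X ∈ A
    swap
    · rw [clusterSum_eq_zero_of_notMem hX]
      exact mul_nonneg (hz X) (Real.exp_pos _).le
    set N := (A.erase X).filter (incomp · X)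
    calc clusterSum incomp zhat A X
        = zhat X *
            ∑ Γ ∈ (A.erase X).powerset.filter (fun Γ => IsCluster incomp (insert X Γ)),
              ∏ Y ∈ Γ, zhat Y := clusterSum_eq_mul_sum_isCluster_insert hX
      _ ≤ zhat X * ∏ Y ∈ N, (1 + clusterSum incomp zhat (A.erase X) Y) :=
          mul_le_mul_of_nonneg_left (sum_prod_isCluster_insert_le hz (notMem_erase X A)) (hz X)
      _ ≤ zhat X * ∏ Y ∈ N, Real.exp (zhat Y * Real.exp (a Y)) := by
          refine mul_le_mul_of_nonneg_left (prod_le_prod (fun Y _ => ?_) fun Y _ => ?_) (hz X)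
          · linarith [clusterSum_nonneg (incomp := incomp) hz (A.erase X) Y]
          · linarith [ih _ (erase_ssubset hX) Y, Real.add_one_le_exp (zhat Y * Real.exp (a Y))]
      _ = zhat X * Real.exp (∑ Y ∈ N, zhat Y * Real.exp (a Y)) := by rw [Real.exp_sum]
      _ ≤ zhat X * Real.exp (a X) :=
          mul_le_mul_of_nonneg_left
            (Real.exp_le_exp.2 (hcond X N fun Y hY => (mem_filter.1 hY).2)) (hz X)

theorem clusterSumTop_le_ofReal (hz : ∀ X, 0 ≤ zhat X) {Y : S} {c : ℝ}
    (h : ∀ A, clusterSum incomp zhat A Y ≤ c) :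
    clusterSumTop incomp zhat Y ≤ ENNReal.ofReal c := by
  refine ENNReal.summable.tsum_le_of_sum_le fun T => ?_
  rw [← ENNReal.ofReal_sum_of_nonneg fun Δ _ => prod_nonneg fun W _ => hz W]
  refine ENNReal.ofReal_le_ofReal (le_trans ?_ (h (T.biUnion Subtype.val)))
  rw [clusterSum]
  refine (sum_map T (Function.Embedding.subtype _) fun Δ => ∏ W ∈ Δ, zhat W).ge.trans ?_
  refine sum_le_sum_of_subset_of_nonneg (fun Δ hΔ => ?_) fun Δ _ _ => prod_nonneg fun W _ => hz W
  obtain ⟨Δ, hΔT, rfl⟩ := mem_map.1 hΔ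
  exact mem_filter.2 ⟨mem_powerset.2 (subset_biUnion_of_mem Subtype.val hΔT), Δ.2⟩

end ClusterSum

theorem statement15_general {S : Type*} (incomp : S → S → Prop)
    (hsym : ∀ X Y, incomp X Y → incomp Y X)
    (zhat : S → ℝ) (hz : ∀ X, 0 ≤ zhat X) (a : S → ℝ) (ha : ∀ X, 0 < a X)
    (hcond : ∀ X : S,
      ∑' Y : {Y : S // incomp Y X}, ENNReal.ofReal (zhat Y.1 * Real.exp (a Y.1))
        ≤ ENNReal.ofReal (a X)) :
    (∀ (A : Finset S) (X : S), X ∈ A →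
        clusterSum incomp zhat A X ≤ zhat X * Real.exp (a X)) ∧
    (∀ X : S,
        ∑' Y : {Y : S // incomp Y X}, clusterSumTop incomp zhat Y.1
          ≤ ENNReal.ofReal (a X)) := by
  have hcond_finite : ∀ X (N : Finset S), (∀ Y ∈ N, incomp Y X) →
      ∑ Y ∈ N, zhat Y * Real.exp (a Y) ≤ a X := fun X =>
    sum_le_of_tsum_subtype_le (fun Y => mul_nonneg (hz Y) (Real.exp_pos _).le) (ha X).le
      (hcond X)
  have : Std.Symm incomp := ⟨hsym⟩
  have hbound := clusterSum_le_mul_exp hz hcond_finite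
  refine ⟨fun A X _ => hbound A X, fun X => le_trans ?_ (hcond X)⟩
  exact ENNReal.tsum_le_tsum fun Y => clusterSumTop_le_ofReal hz fun A => hbound A Y.1

/-- if `Σ_{Y ≁ X} ẑ(Y) e^{a(Y)} ≤ a(X)` for all `X`, then
`𝔛_X(A) ≤ ẑ(X) e^{a(X)}` for all finite `A ∋ X`, and consequently
`Σ_{Y ≁ X} 𝔛_Y(S) ≤ a(X)` for all `X`. -/
theorem statement15 {S : Type*} [Countable S] (incomp : S → S → Prop)
    (hsym : ∀ X Y, incomp X Y → incomp Y X) (hrefl : ∀ X, incomp X X)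
    (zhat : S → ℝ) (hz : ∀ X, 0 ≤ zhat X) (a : S → ℝ) (ha : ∀ X, 0 < a X)
    (hcond : ∀ X : S,
      ∑' Y : {Y : S // incomp Y X}, ENNReal.ofReal (zhat Y.1 * Real.exp (a Y.1))
        ≤ ENNReal.ofReal (a X)) :
    (∀ (A : Finset S) (X : S), X ∈ A →
        clusterSum incomp zhat A X ≤ zhat X * Real.exp (a X)) ∧
    (∀ X : S,
        ∑' Y : {Y : S // incomp Y X}, clusterSumTop incomp zhat Y.1
          ≤ ENNReal.ofReal (a X)) :=
  statement15_general incomp hsym zhat hz a ha hcond
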